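/- If G is a connected simple graph of order at least 3 whose girth is at least 5 (i.e., G contains no cycle of length 3 and no cycle of length 4), then every outer mutual-visibility set of G is independent. -/
import Mathlib


open SimpleGraph

universe u

variable {V : Type*}

/-- Two vertices `u`, `v` are `X`-visible in `G` if some shortest `u,v`-path meets `X`
only in (a subset of) `{u, v}`. -/
def Visible (G : SimpleGraph V) (X : Set V) (u v : V) : Prop :=
  ∃ p : G.Walk u v, p.length = G.dist u v ∧ ∀ w ∈ p.support, w ∈ X → w = u ∨ w = v

/-- `X` is a mutual-visibility set of `G`: every two vertices of `X` are `X`-visible. -/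
def IsMVSet (G : SimpleGraph V) (X : Set V) : Prop :=
  ∀ u ∈ X, ∀ v ∈ X, Visible G X u v

/-- `X` is a total mutual-visibility set of `G`: every two vertices of `G` are `X`-visible. -/
def IsTotalMVSet (G : SimpleGraph V) (X : Set V) : Prop :=
  ∀ u v : V, Visible G X u v

/-- `X` is an outer mutual-visibility set of `G`. -/
def IsOuterMVSet (G : SimpleGraph V) (X : Set V) : Prop :=
  (∀ u ∈ X, ∀ v ∈ X, Visible G X u v) ∧ (∀ x ∈ X, ∀ y ∉ X, Visible G X x y)

/-- `X` is a dual mutual-visibility set of `G`. -/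
def IsDualMVSet (G : SimpleGraph V) (X : Set V) : Prop :=
  (∀ u ∈ X, ∀ v ∈ X, Visible G X u v) ∧ (∀ u ∉ X, ∀ v ∉ X, Visible G X u v)

/-- A set of vertices is independent if no two of its vertices are adjacent. -/
def IsIndependentSet (G : SimpleGraph V) (X : Set V) : Prop :=
  ∀ u ∈ X, ∀ v ∈ X, ¬ G.Adj u v

/-- `u v w` form a convex `P₃` (with middle vertex `v`): `u` and `w` are nonadjacent
distinct vertices whose unique common neighbor is `v`. -/
def IsConvexP3 (G : SimpleGraph V) (u v w : V) : Prop :=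
  G.Adj u v ∧ G.Adj v w ∧ ¬ G.Adj u w ∧ u ≠ w ∧ ∀ z : V, G.Adj u z → G.Adj z w → z = v

/-- The edge `xy` is distance critical: deleting it strictly increases the distance
(as an extended natural number, so disconnection counts) between some pair of
vertices `{u,v} ≠ {x,y}`. -/
def IsDistCriticalEdge (G : SimpleGraph V) (x y : V) : Prop :=
  ∃ u v : V, ({u, v} : Set V) ≠ ({x, y} : Set V) ∧
    G.edist u v < (G.deleteEdges {s(x, y)}).edist u v

/-- A graph is edge-critical if each of its edges is distance critical. -/
def EdgeCritical (G : SimpleGraph V) : Prop :=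
  ∀ x y : V, G.Adj x y → IsDistCriticalEdge G x y

lemma noTri (G : SimpleGraph V) (h5 : 5 ≤ G.egirth) (a b c : V)
    (h1 : G.Adj a b) (h2 : G.Adj b c) (h3 : G.Adj c a) : False := by
  have hc : (Walk.cons h1 (Walk.cons h2 (Walk.cons h3 Walk.nil))).IsCycle := by
    simp [Walk.isCycle_def, Walk.isTrail_def, h1.ne, h2.ne, h3.ne, h1.ne', h2.ne', h3.ne',
      Sym2.eq_iff]
  have := le_egirth.mp h5 a _ hc
  norm_num at this

lemma noC4 (G : SimpleGraph V) (h5 : 5 ≤ G.egirth) (a b c d : V)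
    (hac : a ≠ c) (hbd : b ≠ d)
    (h1 : G.Adj a b) (h2 : G.Adj b c) (h3 : G.Adj c d) (h4 : G.Adj d a) : False := by
  have hc : (Walk.cons h1 (Walk.cons h2 (Walk.cons h3 (Walk.cons h4 Walk.nil)))).IsCycle := by
    simp [Walk.isCycle_def, Walk.isTrail_def, h1.ne, h2.ne, h3.ne, h4.ne, h1.ne', h2.ne',
      h3.ne', h4.ne', hac, hbd, hac.symm, hbd.symm, Sym2.eq_iff]
  have := le_egirth.mp h5 a _ hc
  norm_num at this

/-- Helper: x,y ∈ X adjacent, z a neighbor of y outside {x,y} yields contradiction. -/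
lemma helper (G : SimpleGraph V) (hG : G.Connected) (h5 : 5 ≤ G.egirth) (X : Set V)
    (hX : IsOuterMVSet G X) (x y z : V) (hx : x ∈ X) (hy : y ∈ X)
    (hxy : G.Adj x y) (hyz : G.Adj y z) (hzx : z ≠ x) : False := by
  -- x and z are not adjacent (no triangle), and x ≠ z
  have hnadj : ¬ G.Adj x z := fun h => noTri G h5 x y z hxy hyz h.symm
  -- dist x z = 2
  have hle : G.dist x z ≤ 2 := by
    have := G.dist_le (Walk.cons hxy (Walk.cons hyz Walk.nil))
    simpa using this
  have hdist : G.dist x z = 2 := by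
    have h0 : G.dist x z ≠ 0 := by
      intro h
      exact hzx ((hG.dist_eq_zero_iff.mp h).symm)
    have h1 : G.dist x z ≠ 1 := fun h => hnadj (dist_eq_one_iff_adj.mp h)
    omega
  -- get a visible shortest path from x to z
  have hvis : Visible G X x z := by
    by_cases hz : z ∈ X
    · exact hX.1 x hx z hz
    · exact hX.2 x hx z hz
  obtain ⟨p, hlen, hsup⟩ := hvis
  rw [hdist] at hlen
  -- p has length 2: extract middle vertex b
  cases p with
  | nil => simp at hlen
  | cons h1 q =>
    cases q with
    | nil => simp at hlen
    | cons h2 r =>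
      cases r with
      | nil =>
        rename_i b
        -- h1 : G.Adj x b, h2 : G.Adj b z
        have hbney : b ∈ X → False := by
          intro hbX
          have := hsup b (by simp) hbX
          rcases this with h | h
          · exact h1.ne h.symm
          · exact h2.ne h
        -- b = y, else 4-cycle x y z b
        have hby : b = y := by
          by_contra hne
          exact noC4 G h5 x y z b (fun h => hzx h.symm) (Ne.symm hne) hxy hyz h2.symm h1.symm
        exact hbney (hby ▸ hy)
      | cons h3 r' => simp at hlen

/-- In a connected graph of order at least `3` with girth at least `5`, every
outer MV set is independent. -/
theorem stmt_18 (G : SimpleGraph V) [Fintype V] (hG : G.Connected) (hn : 3 ≤ Fintype.card V)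
    (hgirth : 5 ≤ G.egirth) :
    ∀ X : Set V, IsOuterMVSet G X → IsIndependentSet G X := by
  classical
  intro X hX u hu v hv hadj
  -- find z ∉ {u,v} adjacent to u or v
  have hz : ∃ z : V, z ≠ u ∧ z ≠ v ∧ (G.Adj u z ∨ G.Adj v z) := by
    by_contra hno
    push_neg at hno
    have hno' : ∀ z : V, (G.Adj u z ∨ G.Adj v z) → z = u ∨ z = v := by
      intro z hzadj
      by_contra h
      push_neg at h
      have := hno z h.1 h.2
      tauto
    have key : ∀ (a w : V), G.Walk a w → a = u ∨ a = v → w = u ∨ w = v := by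
      intro a w p
      induction p with
      | nil => exact id
      | cons h q ih =>
        intro ha
        apply ih
        rcases ha with rfl | rfl
        · exact hno' _ (Or.inl h)
        · exact hno' _ (Or.inr h)
    have hex : ∃ w : V, w ≠ u ∧ w ≠ v := by
      by_contra h
      push_neg at h
      have hsub : (Finset.univ : Finset V) ⊆ {u, v} := by
        intro w _
        by_cases hwu : w = u
        · simp [hwu]
        · simp [h w hwu]
      have := Finset.card_le_card hsub
      have h2 : ({u, v} : Finset V).card ≤ 2 := Finset.card_insert_le _ _ |>.trans (by simp)
      simp only [Finset.card_univ] at this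
      omega
    obtain ⟨w, hwu, hwv⟩ := hex
    obtain ⟨p⟩ := hG.preconnected u w
    rcases key u w p (Or.inl rfl) with h | h
    · exact hwu h
    · exact hwv h
  obtain ⟨z, hzu, hzv, hz⟩ := hz
  rcases hz with h | h
  · exact helper G hG hgirth X hX v u z hv hu hadj.symm h hzv
  · exact helper G hG hgirth X hX u v z hu hv hadj h hzu
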